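/- Let M be an integer-valued random variable that is symmetric (P(M = m) = P(M = -m)) and unimodal (m ↦ P(M = m) is non-increasing in |m|), and let d ≥ 0 be an integer and t > 0. Then E[log(I_M(t)/I_{M-d}(t))] ≤ (d + d²)/(2t). -/

import Mathlib

/-!
Write `L m = log I_m(t)` and `e j = L j - L (j - 1)`, so that
`log (I_M / I_{M-d}) = ∑_{k<d} e (M - k)`. Since `L` is even, `e (1 - j) = -e j`, and for `j ≥ 1`
one has `0 ≤ -e j ≤ j / t`: the upper bound comes from
`I_{j-1} / I_j ≤ (j + √(j² + t²)) / t ≤ exp (j / t)`, proved by downward induction from the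
recurrence `t I_n = 2 (n + 1) I_{n+1} + t I_{n+2}`. Pairing `j` with `1 - j` gives
`E[e (M - k)] = ∑_{j ≥ 1} (P(M = k + 1 - j) - P(M = k + j)) (-e j)`; unimodality makes the weights
nonnegative, so this is at most `t⁻¹ ∑_{j ≥ 1} j (P(M = k + 1 - j) - P(M = k + j))`, and symmetry
bounds that sum by `k + 1`. Summing over `k < d` gives `(d + d²) / (2 t)`.
-/

/-- Modified Bessel function of the first kind of integer order `m` (with the
convention `I_{-m} = I_m`), via its power series. -/
noncomputable def besselI (m : ℤ) (t : ℝ) : ℝ :=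
  ∑' k : ℕ, (t / 2) ^ (2 * k + m.natAbs) / ((k.factorial : ℝ) * ((k + m.natAbs).factorial : ℝ))

open Real Finset Filter Topology
open scoped Nat

theorem summable_of_summable_finsetSum_of_sameSign {ι α : Type*} {s : Finset ι} {f : ι → α → ℝ}
    (hsum : Summable fun a => ∑ i ∈ s, f i a)
    (hsign : ∀ᶠ a in cofinite, (∀ i ∈ s, 0 ≤ f i a) ∨ ∀ i ∈ s, f i a ≤ 0) {i : ι} (hi : i ∈ s) :
    Summable (f i) := by
  refine hsum.abs.of_norm_bounded_eventually (hsign.mono fun a ha => ?_)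
  rw [Real.norm_eq_abs]
  rcases ha with h | h
  · rw [abs_of_nonneg (h i hi), abs_of_nonneg (sum_nonneg h)]
    exact single_le_sum h hi
  · rw [abs_of_nonpos (h i hi), abs_of_nonpos (sum_nonpos h), ← sum_neg_distrib]
    exact single_le_sum (f := fun j => -f j a) (fun j hj => neg_nonneg.2 (h j hj)) hi

section IntervalSums

variable {M : Type*} [AddCommMonoid M]

theorem sum_Icc_comp_add (f : ℤ → M) (a b c : ℤ) :
    ∑ m ∈ Icc a b, f (m + c) = ∑ m ∈ Icc (a + c) (b + c), f m := by
  rw [← map_add_right_Icc, sum_map]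
  rfl

theorem sum_Icc_comp_sub (f : ℤ → M) (a b c : ℤ) :
    ∑ m ∈ Icc a b, f (c - m) = ∑ m ∈ Icc (c - b) (c - a), f m := by
  refine sum_nbij' (c - ·) (c - ·) ?_ ?_ ?_ ?_ fun m _ => rfl <;> intro m <;>
    simp only [mem_Icc] <;> omega

theorem sum_Icc_add_sum_Icc (f : ℤ → M) {a b c : ℤ} (hab : a ≤ b + 1) (hbc : b ≤ c) :
    ∑ m ∈ Icc a b, f m + ∑ m ∈ Icc (b + 1) c, f m = ∑ m ∈ Icc a c, f m := by
  rw [← sum_union (disjoint_left.2 fun m hm hm' => by rw [mem_Icc] at hm hm'; omega)]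
  congr 1
  ext m
  simp only [mem_union, mem_Icc]
  omega

end IntervalSums

section SymmetricMass

variable {p : ℤ → ℝ}

theorem sum_Icc_neg_mul_eq_zero (hsymm : ∀ m, p (-m) = p m) (a : ℤ) :
    ∑ m ∈ Icc (-a) a, (m : ℝ) * p m = 0 := by
  have h := sum_Icc_comp_sub (fun m : ℤ => (m : ℝ) * p m) (-a) a 0
  simp only [zero_sub, neg_neg, hsymm, Int.cast_neg, neg_mul, sum_neg_distrib] at h
  linarith

theorem sum_Icc_neg_self_eq_add_two_mul (hsymm : ∀ m, p (-m) = p m) {a b : ℤ} (ha : 0 ≤ a)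
    (hab : a ≤ b) :
    ∑ m ∈ Icc (-b) b, p m = ∑ m ∈ Icc (-a) a, p m + 2 * ∑ m ∈ Icc (a + 1) b, p m := by
  have hleft : ∑ m ∈ Icc (-b) (-a - 1), p m = ∑ m ∈ Icc (a + 1) b, p m := by
    simpa only [zero_sub, neg_add', hsymm] using (sum_Icc_comp_sub p (a + 1) b 0).symm
  have h := sum_Icc_add_sum_Icc p (a := -b) (b := -a - 1) (c := a) (by omega) (by omega)
  rw [sub_add_cancel] at h
  rw [← sum_Icc_add_sum_Icc p (a := -b) (b := a) (c := b) (by omega) hab, ← h, hleft]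
  ring

theorem sum_Icc_mul_sub_le (hp0 : ∀ m, 0 ≤ p m) (hmass : ∀ s : Finset ℤ, ∑ m ∈ s, p m ≤ 1)
    (hsymm : ∀ m, p (-m) = p m) (k : ℕ) {N : ℕ} (hN : 2 * k + 1 ≤ N) :
    ∑ j ∈ Icc (1 : ℤ) N, (j : ℝ) * (p (1 + k - j) - p (j + k)) ≤ k + 1 := by
  set K : ℤ := (k : ℤ) with hK
  set R : ℤ := N - K - 1
  have hKR : K ≤ R := by omega
  have hK0 : 0 ≤ K := by omega
  have hA : ∑ j ∈ Icc (1 : ℤ) N, (j : ℝ) * p (1 + K - j) =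
      ∑ m ∈ Icc (-K) R, ((m : ℝ) + K + 1) * p m := by
    rw [show Icc (1 : ℤ) N = Icc (-K + (K + 1)) (R + (K + 1)) by congr 1 <;> omega,
      ← sum_Icc_comp_add]
    refine sum_congr rfl fun m _ => ?_
    rw [show 1 + K - (m + (K + 1)) = -m by ring, hsymm]
    push_cast
    ring
  have hB : ∑ j ∈ Icc (1 : ℤ) N, (j : ℝ) * p (j + K) =
      ∑ m ∈ Icc (1 + K) (N + K), ((m : ℝ) - K) * p m := by
    rw [← sum_Icc_comp_add]
    refine sum_congr rfl fun j _ => ?_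
    push_cast
    ring
  have hB_ge : ∑ m ∈ Icc (K + 1) R, ((m : ℝ) - K) * p m ≤
      ∑ m ∈ Icc (1 + K) (N + K), ((m : ℝ) - K) * p m :=
    sum_le_sum_of_subset_of_nonneg (Icc_subset_Icc (by omega) (by omega)) fun m hm _ =>
      mul_nonneg (sub_nonneg.2 (by simp only [mem_Icc] at hm; exact_mod_cast (by omega : K ≤ m)))
        (hp0 m)
  have hmid : ∑ m ∈ Icc (-K) K, ((m : ℝ) + K + 1) * p m = (K + 1) * ∑ m ∈ Icc (-K) K, p m := by
    simp only [add_assoc, add_mul, sum_add_distrib, sum_Icc_neg_mul_eq_zero hsymm, mul_sum]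
    ring
  have hsymm_split := sum_Icc_neg_self_eq_add_two_mul hsymm hK0 hKR
  have hnonneg : 0 ≤ ∑ m ∈ Icc (K + 1) R, p m := sum_nonneg fun m _ => hp0 m
  have hsplit := sum_Icc_add_sum_Icc (fun m => ((m : ℝ) + K + 1) * p m) (a := -K) (b := K) (c := R)
    (by omega) (by omega)
  have hdiff : ∑ m ∈ Icc (K + 1) R, ((m : ℝ) + K + 1) * p m -
      ∑ m ∈ Icc (K + 1) R, ((m : ℝ) - K) * p m = (2 * K + 1) * ∑ m ∈ Icc (K + 1) R, p m := by
    rw [← sum_sub_distrib, mul_sum]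
    exact sum_congr rfl fun m _ => by ring
  simp only [mul_sub, sum_sub_distrib]
  rw [hA, hB, ← hsplit, hmid, show (k : ℝ) = K by simp [hK]]
  have hK1 : (0 : ℝ) ≤ K + 1 := by exact_mod_cast (by omega : 0 ≤ K + 1)
  nlinarith [mul_le_mul_of_nonneg_left (hmass (Icc (-R) R)) hK1]

theorem tsum_mul_comp_sub_le {e : ℤ → ℝ} {c : ℝ} (hp0 : ∀ m, 0 ≤ p m)
    (hmass : ∀ s : Finset ℤ, ∑ m ∈ s, p m ≤ 1) (hsymm : ∀ m, p (-m) = p m)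
    (hunimodal : ∀ m m' : ℤ, m.natAbs ≤ m'.natAbs → p m' ≤ p m) (hc : 0 ≤ c)
    (he : ∀ j, e (1 - j) = -e j) (hle : ∀ j : ℤ, 1 ≤ j → -e j ≤ c * j) (k : ℕ)
    (hsum : Summable fun m => p m * e (m - k)) :
    ∑' m, p m * e (m - k) ≤ c * (k + 1) := by
  set f : ℤ → ℝ := fun j => p (j + k) * e j
  have hshift : (fun m => p m * e (m - k)) ∘ Equiv.addRight (k : ℤ) = f := by
    funext j
    simp [f]
  have hfsum : Summable f := hshift ▸ (Equiv.addRight (k : ℤ)).summable_iff.2 hsum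
  have htsum : ∑' m, p m * e (m - k) = ∑' j, f j := by
    rw [← hshift, ← (Equiv.addRight (k : ℤ)).tsum_eq]
    rfl
  -- The windows `[1 - N, N]` are invariant under `j ↦ 1 - j`, which turns `e j` into `-e j`.
  have hwindow (N : ℕ) (hN : 2 * k + 1 ≤ N) : ∑ j ∈ Icc (1 - N : ℤ) N, f j ≤ c * (k + 1) := by
    have hpair : ∑ j ∈ Icc (1 - N : ℤ) N, f j =
        ∑ j ∈ Icc (1 : ℤ) N, (p (1 + k - j) - p (j + k)) * -e j := by
      have hsplit := sum_Icc_add_sum_Icc f (a := 1 - N) (b := 0) (c := N) (by omega) (by omega)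
      have hreflect := sum_Icc_comp_sub f 1 N 1
      rw [zero_add] at hsplit
      rw [sub_self] at hreflect
      rw [← hsplit, ← hreflect, ← sum_add_distrib]
      refine sum_congr rfl fun j _ => ?_
      simp only [f, he, show 1 - j + (k : ℤ) = 1 + k - j by ring]
      ring
    calc ∑ j ∈ Icc (1 - N : ℤ) N, f j
        = ∑ j ∈ Icc (1 : ℤ) N, (p (1 + k - j) - p (j + k)) * -e j := hpair
      _ ≤ ∑ j ∈ Icc (1 : ℤ) N, (p (1 + k - j) - p (j + k)) * (c * j) := by
        refine sum_le_sum fun j hj => ?_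
        rw [mem_Icc] at hj
        exact mul_le_mul_of_nonneg_left (hle j hj.1) (sub_nonneg.2 (hunimodal _ _ (by omega)))
      _ = c * ∑ j ∈ Icc (1 : ℤ) N, (j : ℝ) * (p (1 + k - j) - p (j + k)) := by
        rw [mul_sum]
        exact sum_congr rfl fun j _ => by ring
      _ ≤ c * (k + 1) := mul_le_mul_of_nonneg_left (sum_Icc_mul_sub_le hp0 hmass hsymm k hN) hc
  have hwindows : Tendsto (fun N : ℕ => Icc (1 - N : ℤ) N) atTop atTop :=
    tendsto_atTop_finset_of_monotone
      (fun M N (h : M ≤ N) => Icc_subset_Icc (by omega) (by omega))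
      fun j => ⟨j.natAbs + 1, by simp only [mem_Icc]; omega⟩
  rw [htsum]
  exact le_of_tendsto (hfsum.hasSum.comp hwindows) (eventually_atTop.2 ⟨2 * k + 1, hwindow⟩)

end SymmetricMass

section PowerSeries

variable (t : ℝ)

noncomputable def besselTerm (n k : ℕ) : ℝ :=
  (t / 2) ^ (2 * k + n) / ((k ! : ℝ) * ((k + n)! : ℝ))

theorem besselI_natCast (n : ℕ) : besselI n t = ∑' k, besselTerm t n k := rfl

theorem besselI_neg (m : ℤ) : besselI (-m) t = besselI m t := by
  simp only [besselI, Int.natAbs_neg]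

theorem summable_besselTerm (n : ℕ) : Summable (besselTerm t n) := by
  refine Summable.of_norm_bounded
    ((Real.summable_pow_div_factorial (t ^ 2 / 4)).mul_left (|t / 2| ^ n / n !)) fun k => ?_
  have hnum : |t / 2| ^ (2 * k + n) = |t / 2| ^ n * (t ^ 2 / 4) ^ k := by
    rw [pow_add, pow_mul, sq_abs, mul_comm]; ring
  have hden : (n ! : ℝ) * k ! ≤ k ! * (k + n)! := by
    rw [mul_comm]
    gcongr
    exact Nat.le_add_left n k
  calc ‖besselTerm t n k‖ = |t / 2| ^ n * (t ^ 2 / 4) ^ k / (k ! * (k + n)!) := by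
        rw [besselTerm, norm_div, norm_pow, Real.norm_eq_abs, hnum,
          Real.norm_of_nonneg (by positivity)]
    _ ≤ |t / 2| ^ n * (t ^ 2 / 4) ^ k / (n ! * k !) := by gcongr
    _ = |t / 2| ^ n / n ! * ((t ^ 2 / 4) ^ k / k !) := by ring

theorem mul_besselI_eq (n : ℕ) :
    t * besselI n t = 2 * (n + 1) * besselI (n + 1 : ℕ) t + t * besselI (n + 2 : ℕ) t := by
  have hzero : t * besselTerm t n 0 = 2 * (n + 1) * besselTerm t (n + 1) 0 := by
    simp only [besselTerm, mul_zero, zero_add, Nat.factorial_succ]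
    push_cast
    field_simp
    ring
  have hsucc (k : ℕ) : t * besselTerm t n (k + 1) =
      2 * (n + 1) * besselTerm t (n + 1) (k + 1) + t * besselTerm t (n + 2) k := by
    simp only [besselTerm, show k + 1 + (n + 1) = k + n + 2 by ring,
      show k + (n + 2) = k + n + 2 by ring, show k + 1 + n = k + n + 1 by ring, Nat.factorial_succ]
    push_cast
    field_simp
    ring
  have hs (m : ℕ) : Summable fun k => besselTerm t m (k + 1) :=
    (summable_nat_add_iff 1).2 (summable_besselTerm t m)
  simp only [besselI_natCast]
  rw [(summable_besselTerm t n).tsum_eq_zero_add, (summable_besselTerm t (n + 1)).tsum_eq_zero_add,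
    mul_add, ← tsum_mul_left, tsum_congr hsucc, ((hs _).mul_left _).tsum_add
      ((summable_besselTerm t _).mul_left _), tsum_mul_left, tsum_mul_left, hzero]
  ring

end PowerSeries

theorem besselI_natCast_pos {t : ℝ} (ht : 0 < t) (n : ℕ) : 0 < besselI n t :=
  (summable_besselTerm t n).tsum_pos (fun k => by unfold besselTerm; positivity) 0
    (by unfold besselTerm; positivity)

theorem besselI_pos {t : ℝ} (ht : 0 < t) (m : ℤ) : 0 < besselI m t :=
  besselI_natCast_pos ht m.natAbs

/- `BesselRatioGE t n` and `BesselRatioLE t n` are the two sides of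
`t / (n + 1 + √((n + 1)² + t²)) ≤ I_{n+1}(t) / I_n(t) ≤ t / (n + √(n² + t²))`,
cleared of denominators. -/
def BesselRatioLE (t : ℝ) (n : ℕ) : Prop :=
  (n + √(n ^ 2 + t ^ 2)) * besselI (n + 1 : ℕ) t ≤ t * besselI n t

def BesselRatioGE (t : ℝ) (n : ℕ) : Prop :=
  t * besselI n t ≤ (n + 1 + √((n + 1) ^ 2 + t ^ 2)) * besselI (n + 1 : ℕ) t

section RatioBounds

variable {t : ℝ}

theorem besselRatioLE_of_sq_le (ht : 0 < t) {n : ℕ} (hn : t ^ 2 ≤ 4 * n + 4) :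
    BesselRatioLE t n := by
  have hsqrt : √(n ^ 2 + t ^ 2) ≤ n + 2 :=
    Real.sqrt_le_iff.2 ⟨by positivity, by nlinarith⟩
  have := mul_besselI_eq t n
  have := besselI_natCast_pos ht (n + 1)
  have := besselI_natCast_pos ht (n + 2)
  unfold BesselRatioLE
  nlinarith

theorem besselRatioGE_of_besselRatioLE_succ (ht : 0 < t) {n : ℕ} (h : BesselRatioLE t (n + 1)) :
    BesselRatioGE t n := by
  unfold BesselRatioLE at h
  unfold BesselRatioGE
  rw [Nat.cast_succ (R := ℝ), show n + 1 + 1 = n + 2 from rfl] at h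
  set s := √((n + 1 : ℝ) ^ 2 + t ^ 2)
  have hs : s ^ 2 = (n + 1) ^ 2 + t ^ 2 := Real.sq_sqrt (by positivity)
  have hpos : 0 < n + 1 + s := by positivity
  have := mul_besselI_eq t n
  -- `t² = (s - (n + 1)) (s + n + 1)`, so the hypothesis says `t I_{n+2} ≤ (s - (n + 1)) I_{n+1}`.
  have key : (n + 1 + s) * (t * besselI n t) ≤
      (n + 1 + s) * ((n + 1 + s) * besselI (n + 1 : ℕ) t) := by
    rw [show (n + 1 + s) * ((n + 1 + s) * besselI (n + 1 : ℕ) t)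
      = ((n + 1) ^ 2 + 2 * (n + 1) * s + s ^ 2) * besselI (n + 1 : ℕ) t by ring, hs]
    nlinarith [mul_le_mul_of_nonneg_left h ht.le]
  exact le_of_mul_le_mul_left key hpos

theorem besselRatioLE_of_besselRatioGE_succ (ht : 0 < t) {n : ℕ} (h : BesselRatioGE t (n + 1)) :
    BesselRatioLE t n := by
  unfold BesselRatioGE at h
  unfold BesselRatioLE
  rw [Nat.cast_succ (R := ℝ), show (n : ℝ) + 1 + 1 = n + 2 by ring,
    show n + 1 + 1 = n + 2 from rfl] at h
  set s := √((n + 2 : ℝ) ^ 2 + t ^ 2)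
  have hs : s ^ 2 = (n + 2) ^ 2 + t ^ 2 := Real.sq_sqrt (by positivity)
  have hle : √((n : ℝ) ^ 2 + t ^ 2) ≤ s := Real.sqrt_le_sqrt (by nlinarith)
  have hpos : 0 < n + 2 + s := by positivity
  have := mul_besselI_eq t n
  have := besselI_natCast_pos ht (n + 1)
  have hcoef : (n + 2 + s) * (n + √((n : ℝ) ^ 2 + t ^ 2)) ≤ 2 * (n + 1) * (n + 2 + s) + t ^ 2 := by
    nlinarith [mul_nonneg (sub_nonneg.2 hle) (by positivity : (0 : ℝ) ≤ s + n + 2)]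
  have key : (n + 2 + s) * ((n + √((n : ℝ) ^ 2 + t ^ 2)) * besselI (n + 1 : ℕ) t)
      ≤ (n + 2 + s) * (t * besselI n t) := by
    nlinarith [mul_le_mul_of_nonneg_right hcoef (besselI_natCast_pos ht (n + 1)).le,
      mul_le_mul_of_nonneg_left h ht.le]
  exact le_of_mul_le_mul_left key hpos

theorem besselRatioLE (ht : 0 < t) (n : ℕ) : BesselRatioLE t n := by
  -- Descend two indices at a time from an index where `besselRatioLE_of_sq_le` applies.
  suffices ∀ k n : ℕ, t ^ 2 ≤ 4 * n + 4 + 8 * k → BesselRatioLE t n from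
    this ⌈t ^ 2⌉₊ n (by linarith [Nat.le_ceil (t ^ 2), (n.cast_nonneg : (0 : ℝ) ≤ n)])
  intro k
  induction k with
  | zero => intro n hn; exact besselRatioLE_of_sq_le ht (by simpa using hn)
  | succ k ih =>
    intro n hn
    refine besselRatioLE_of_besselRatioGE_succ ht
      (besselRatioGE_of_besselRatioLE_succ ht (ih (n + 2) ?_))
    push_cast at hn ⊢
    linarith

theorem besselRatioGE (ht : 0 < t) (n : ℕ) : BesselRatioGE t n :=
  besselRatioGE_of_besselRatioLE_succ ht (besselRatioLE ht (n + 1))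

end RatioBounds

theorem besselI_succ_le {t : ℝ} (ht : 0 < t) (n : ℕ) : besselI (n + 1 : ℕ) t ≤ besselI n t := by
  have hsqrt : t ≤ √(n ^ 2 + t ^ 2) := Real.le_sqrt_of_sq_le (by nlinarith)
  have := besselRatioLE ht n
  have := besselI_natCast_pos ht (n + 1)
  unfold BesselRatioLE at *
  refine le_of_mul_le_mul_left ?_ ht
  nlinarith [n.cast_nonneg (α := ℝ)]

theorem add_sqrt_sq_add_sq_le_mul_exp {x t : ℝ} (hx : 0 ≤ x) (ht : 0 < t) :
    x + √(x ^ 2 + t ^ 2) ≤ t * exp (x / t) := by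
  have hsqrt : √(x ^ 2 + t ^ 2) = t * √(1 + (x / t) ^ 2) := by
    rw [show x ^ 2 + t ^ 2 = t ^ 2 * (1 + (x / t) ^ 2) by field_simp; ring,
      Real.sqrt_mul (sq_nonneg t), Real.sqrt_sq ht.le]
  have harsinh : arsinh (x / t) ≤ x / t := by
    simpa only [arsinh_sinh] using arsinh_le_arsinh.2 (self_le_sinh_iff.2 (by positivity))
  calc x + √(x ^ 2 + t ^ 2) = t * exp (arsinh (x / t)) := by
        rw [exp_arsinh, hsqrt]; field_simp
    _ ≤ t * exp (x / t) := by gcongr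

theorem log_besselI_sub_log_besselI_succ_le {t : ℝ} (ht : 0 < t) (n : ℕ) :
    log (besselI n t) - log (besselI (n + 1 : ℕ) t) ≤ (n + 1) / t := by
  have hI := besselI_natCast_pos ht (n + 1)
  have hle : besselI n t ≤ exp ((n + 1) / t) * besselI (n + 1 : ℕ) t := by
    refine le_of_mul_le_mul_left ?_ ht
    calc t * besselI n t ≤ (n + 1 + √((n + 1) ^ 2 + t ^ 2)) * besselI (n + 1 : ℕ) t :=
          besselRatioGE ht n
      _ ≤ t * exp ((n + 1) / t) * besselI (n + 1 : ℕ) t := by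
          gcongr
          exact add_sqrt_sq_add_sq_le_mul_exp (by positivity) ht
      _ = t * (exp ((n + 1) / t) * besselI (n + 1 : ℕ) t) := by ring
  have := log_le_log (besselI_natCast_pos ht n) hle
  rw [log_mul (exp_ne_zero _) hI.ne', log_exp] at this
  linarith

noncomputable def logBesselIDiff (t : ℝ) (j : ℤ) : ℝ :=
  log (besselI j t) - log (besselI (j - 1) t)

theorem logBesselIDiff_one_sub (t : ℝ) (j : ℤ) :
    logBesselIDiff t (1 - j) = -logBesselIDiff t j := by
  rw [logBesselIDiff, logBesselIDiff, show 1 - j = -(j - 1) by ring, show -(j - 1) - 1 = -j by ring,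
    besselI_neg, besselI_neg]
  ring

theorem logBesselIDiff_nonpos {t : ℝ} (ht : 0 < t) {j : ℤ} (hj : 1 ≤ j) :
    logBesselIDiff t j ≤ 0 := by
  obtain ⟨n, rfl⟩ : ∃ n : ℕ, j = n + 1 := ⟨(j - 1).toNat, by omega⟩
  rw [logBesselIDiff, add_sub_cancel_right, ← Nat.cast_succ]
  exact sub_nonpos.2 (log_le_log (besselI_natCast_pos ht _) (besselI_succ_le ht n))

theorem neg_logBesselIDiff_le {t : ℝ} (ht : 0 < t) {j : ℤ} (hj : 1 ≤ j) :
    -logBesselIDiff t j ≤ t⁻¹ * j := by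
  obtain ⟨n, rfl⟩ : ∃ n : ℕ, j = n + 1 := ⟨(j - 1).toNat, by omega⟩
  rw [logBesselIDiff, add_sub_cancel_right, neg_sub, inv_mul_eq_div]
  exact_mod_cast log_besselI_sub_log_besselI_succ_le ht n

theorem logBesselIDiff_nonneg {t : ℝ} (ht : 0 < t) {j : ℤ} (hj : j ≤ 0) :
    0 ≤ logBesselIDiff t j := by
  have := logBesselIDiff_nonpos ht (j := 1 - j) (by omega)
  rwa [logBesselIDiff_one_sub, neg_nonpos] at this

theorem sum_range_logBesselIDiff (t : ℝ) (m : ℤ) (d : ℕ) :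
    ∑ k ∈ range d, logBesselIDiff t (m - k) = log (besselI m t) - log (besselI (m - d) t) := by
  induction d with
  | zero => simp
  | succ d ih =>
    rw [sum_range_succ, ih, logBesselIDiff, show m - (d + 1 : ℕ) = m - d - 1 by push_cast; ring]
    ring

theorem log_besselI_div_eq_sum {t : ℝ} (ht : 0 < t) (m : ℤ) (d : ℕ) :
    log (besselI m t / besselI (m - d) t) = ∑ k ∈ range d, logBesselIDiff t (m - k) := by
  rw [log_div (besselI_pos ht m).ne' (besselI_pos ht _).ne', sum_range_logBesselIDiff]

theorem summable_mul_logBesselIDiff {p : ℤ → ℝ} (hp0 : ∀ m, 0 ≤ p m) {t : ℝ} (ht : 0 < t) {d k : ℕ}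
    (hk : k ∈ range d) (hsum : Summable fun m : ℤ => p m * log (besselI m t / besselI (m - d) t)) :
    Summable fun m : ℤ => p m * logBesselIDiff t (m - k) := by
  refine summable_of_summable_finsetSum_of_sameSign
    (f := fun (k : ℕ) (m : ℤ) => p m * logBesselIDiff t (m - k)) ?_ ?_ hk
  · simpa only [log_besselI_div_eq_sum ht, mul_sum] using hsum
  · filter_upwards [(Set.finite_Ioo (0 : ℤ) d).eventually_cofinite_notMem] with m hm
    rw [Set.mem_Ioo, not_and_or, not_lt, not_lt] at hm
    refine hm.imp (fun hm i _ => ?_) fun hm i hi => ?_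
    · exact mul_nonneg (hp0 m) (logBesselIDiff_nonneg ht (by omega))
    · exact mul_nonpos_of_nonneg_of_nonpos (hp0 m)
        (logBesselIDiff_nonpos ht (by rw [mem_range] at hi; omega))

theorem sum_range_natCast_add_one (d : ℕ) : ∑ k ∈ range d, ((k : ℝ) + 1) = (d + d ^ 2) / 2 := by
  induction d with
  | zero => simp
  | succ d ih =>
    rw [sum_range_succ, ih]
    push_cast
    ring

/-- Expectation bound for ratios of modified Bessel functions under a symmetric
unimodal integer-valued random variable with probability mass function `p`. -/
theorem expectation_log_besselI_ratio_le
    (p : ℤ → ℝ) (hp0 : ∀ m, 0 ≤ p m) (hp1 : ∑' m : ℤ, p m = 1)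
    (hsymm : ∀ m, p (-m) = p m)
    (hunimodal : ∀ m m' : ℤ, m.natAbs ≤ m'.natAbs → p m' ≤ p m)
    (d : ℕ) (t : ℝ) (ht : 0 < t)
    (hsum : Summable fun m : ℤ => p m * Real.log (besselI m t / besselI (m - d) t)) :
    ∑' m : ℤ, p m * Real.log (besselI m t / besselI (m - d) t)
      ≤ ((d : ℝ) + (d : ℝ) ^ 2) / (2 * t) := by
  have hp : Summable p := by
    by_contra h
    simp [tsum_eq_zero_of_not_summable h] at hp1
  have hmass (s : Finset ℤ) : ∑ m ∈ s, p m ≤ 1 := hp1 ▸ hp.sum_le_tsum s fun m _ => hp0 m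
  have hpieces (k : ℕ) (hk : k ∈ range d) := summable_mul_logBesselIDiff hp0 ht hk hsum
  calc ∑' m : ℤ, p m * log (besselI m t / besselI (m - d) t)
      = ∑ k ∈ range d, ∑' m : ℤ, p m * logBesselIDiff t (m - k) := by
        simp only [log_besselI_div_eq_sum ht, mul_sum]
        exact Summable.tsum_finsetSum hpieces
    _ ≤ ∑ k ∈ range d, t⁻¹ * (k + 1) := sum_le_sum fun k hk =>
        tsum_mul_comp_sub_le hp0 hmass hsymm hunimodal (inv_nonneg.2 ht.le)
          (logBesselIDiff_one_sub t) (fun _ => neg_logBesselIDiff_le ht) k (hpieces k hk)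
    _ = ((d : ℝ) + (d : ℝ) ^ 2) / (2 * t) := by
        rw [← mul_sum, sum_range_natCast_add_one]
        field_simp
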